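/- Let T and U be triangulations of a convex polygon π with at least four vertices and let (a,b) be a clockwise-oriented boundary edge of π. If some geodesic between T and U in the flip-graph of π contains exactly f flips incident to {a,b}, then d(T,U) ≥ d(T∖a, U∖a) + f. -/

import Mathlib

/-!
Combinatorial model of a convex polygon with `n` vertices, labeled by `Fin n`
in clockwise cyclic order.
-/

/-- `c` lies strictly inside the clockwise arc going from `a` to `b`. -/
def Between (n : ℕ) (a c b : Fin n) : Prop :=
  0 < (c - a).val ∧ (c - a).val < (b - a).val

/-- Two edges on the polygon cross: their endpoints strictly interleave
in the clockwise cyclic order. -/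
def Cross (n : ℕ) (e f : Finset (Fin n)) : Prop :=
  ∃ a b c d : Fin n, e = {a, b} ∧ f = {c, d} ∧ Between n a c b ∧ Between n b d a

/-- The vertex immediately following `i` clockwise. -/
def nextV (n : ℕ) (i : Fin n) : Fin n :=
  ⟨(i.val + 1) % n, Nat.mod_lt _ i.pos⟩

/-- Boundary edges of the polygon: the pairs of cyclically consecutive vertices. -/
def IsBoundary (n : ℕ) (e : Finset (Fin n)) : Prop :=
  ∃ i : Fin n, e = {i, nextV n i}

/-- `E` is a triangulation of the convex (sub)polygon on the vertex set `W`: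
an inclusion-maximal set of pairwise non-crossing edges on `W`. -/
def IsTriangulationOn (n : ℕ) (W : Finset (Fin n)) (E : Finset (Finset (Fin n))) : Prop :=
  (∀ e ∈ E, e ⊆ W) ∧ (∀ e ∈ E, e.card = 2) ∧
    (∀ e ∈ E, ∀ f ∈ E, ¬ Cross n e f) ∧
    (∀ e : Finset (Fin n), e ⊆ W → e.card = 2 → (∀ f ∈ E, ¬ Cross n e f) → e ∈ E)

/-- A triangulation of the convex polygon with `n` vertices. -/
structure Triangulation (n : ℕ) where
  edges : Finset (Finset (Fin n))
  isTri : IsTriangulationOn n Finset.univ edges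

theorem Triangulation.edges_injective (n : ℕ) :
    Function.Injective (Triangulation.edges (n := n)) := by
  rintro ⟨e, he⟩ ⟨f, hf⟩ h
  dsimp at h
  subst h
  rfl

/-- The flip-graph of the polygon: two triangulations are adjacent exactly when
they differ by a single edge. -/
def flipGraph (n : ℕ) : SimpleGraph (Triangulation n) where
  Adj T U := T ≠ U ∧ (T.edges \ U.edges).card = 1 ∧ (U.edges \ T.edges).card = 1
  symm := ⟨fun T U h => ⟨h.1.symm, h.2.2, h.2.1⟩⟩
  loopless := ⟨fun T h => h.1 rfl⟩

noncomputable instance (n : ℕ) : Fintype (Triangulation n) :=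
  Fintype.ofInjective Triangulation.edges (Triangulation.edges_injective n)

open Classical in
/-- The number of interior edges of `T` incident to the vertex `v`. -/
noncomputable def interiorDeg (n : ℕ) (T : Triangulation n) (v : Fin n) : ℕ :=
  (T.edges.filter fun e => v ∈ e ∧ ¬ IsBoundary n e).card

/-- `T` has an ear in `v`: no interior edge of `T` is incident to `v`. -/
def HasEar (n : ℕ) (T : Triangulation n) (v : Fin n) : Prop :=
  ∀ e ∈ T.edges, ¬ IsBoundary n e → v ∉ e

/-- The eccentricity of `T` in the flip-graph: the maximum of `d(T,U)` over all
triangulations `U`. -/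
noncomputable def eccentricity (n : ℕ) (T : Triangulation n) : ℕ :=
  Finset.univ.sup fun U : Triangulation n => (flipGraph n).dist T U

/-- The monotone relabeling of the vertices of the polygon after the deletion of
the vertex `a`. -/
def collapse (n : ℕ) (a v : Fin (n + 2)) : Fin (n + 1) :=
  ⟨if v.val < a.val then v.val else v.val - 1, by
    have := v.isLt; have := a.isLt; split <;> omega⟩

/-- The edge set of the triangulation `T∖a` obtained by deleting the vertex `a` from a
triangulation with edge set `E`: remove the boundary edge `{a, a+1}`, replace `a` by
`a+1` in every remaining edge, and relabel the remaining vertices monotonically. -/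
def deleteEdges (n : ℕ) (a : Fin (n + 2)) (E : Finset (Finset (Fin (n + 2)))) :
    Finset (Finset (Fin (n + 1))) :=
  (E.erase {a, a + 1}).image fun e =>
    e.image fun v => collapse n a (if v = a then a + 1 else v)

/-- `c` is an apex of a triangle of `X` on the boundary edge `{a,b}`. -/
def ApexOf (n : ℕ) (X : Triangulation n) (a b c : Fin n) : Prop :=
  c ≠ a ∧ c ≠ b ∧ ({a, c} : Finset (Fin n)) ∈ X.edges ∧ ({b, c} : Finset (Fin n)) ∈ X.edges

/-- The flip between the adjacent triangulations `X` and `Y` is incident to `{a,b}`: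
it affects the triangle containing `{a,b}`. -/
def FlipIncident (n : ℕ) (X Y : Triangulation n) (a b : Fin n) : Prop :=
  ∃ c : Fin n, (ApexOf n X a b c ∧ ¬ ApexOf n Y a b c) ∨
    (ApexOf n Y a b c ∧ ¬ ApexOf n X a b c)

open Classical in
/-- The number of flips incident to `{a,b}` along the walk `p` in the flip-graph. -/
noncomputable def flipsIncident {n : ℕ} {T U : Triangulation n}
    (p : (flipGraph n).Walk T U) (a b : Fin n) : ℕ :=
  (p.darts.filter fun d => decide (FlipIncident n d.toProd.1 d.toProd.2 a b)).length

open Classical in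
/-- `a 0, …, a (k-1)` is a shelling of `T` at `v`: an ordering of the vertices not
joined to `v` by an edge of `T` such that, for every `i`, the edges of `T` incident
to none of `a i, …, a (k-1)` form a triangulation of a convex polygon. -/
def IsShelling (n k : ℕ) (T : Triangulation n) (v : Fin n) (a : Fin k → Fin n) : Prop :=
  Function.Injective a ∧
    (∀ w : Fin n, (∃ i, a i = w) ↔ w ≠ v ∧ ({v, w} : Finset (Fin n)) ∉ T.edges) ∧
    ∀ i : Fin k,
      IsTriangulationOn n (Finset.univ.filter fun w => ∀ j, i ≤ j → w ≠ a j)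
        (T.edges.filter fun e => ∀ j, i ≤ j → a j ∉ e)

/-- `a i` is incident to at least two interior edges of `U` whose other vertex is not
among `a i, …, a (k-1)`. -/
def GoodAt (n k : ℕ) (U : Triangulation n) (a : Fin k → Fin n) (i : Fin k) : Prop :=
  ∃ e₁ e₂ : Finset (Fin n), e₁ ∈ U.edges ∧ e₂ ∈ U.edges ∧ e₁ ≠ e₂ ∧
    ¬ IsBoundary n e₁ ∧ ¬ IsBoundary n e₂ ∧ a i ∈ e₁ ∧ a i ∈ e₂ ∧
    (∀ w ∈ e₁, w ≠ a i → ∀ j, i ≤ j → w ≠ a j) ∧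
    (∀ w ∈ e₂, w ≠ a i → ∀ j, i ≤ j → w ≠ a j)

/-- The set `Ω(T,v)`: triangulations `U` with an ear in `v` such that, for some
shelling `a` of `T` at `v`, every `a i` is incident to at least two interior edges of
`U` whose other vertex is not among `a i, …, a (k-1)`. -/
def Omega (n k : ℕ) (T : Triangulation n) (v : Fin n) : Set (Triangulation n) :=
  {U | HasEar n U v ∧ ∃ a : Fin k → Fin n, IsShelling n k T v a ∧ ∀ i, GoodAt n k U a i}

/-- The set `Ω̃(T,a,b)`: triangulations `U` such that every interior edge shared by `T`
and `U` is incident to `a` or to `b`, and every vertex on the left of `(a,b)` is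
incident to at least two interior edges of `U`. -/
def OmegaTilde (n : ℕ) (T : Triangulation n) (a b : Fin n) : Set (Triangulation n) :=
  {U | (∀ e ∈ T.edges, e ∈ U.edges → ¬ IsBoundary n e → a ∈ e ∨ b ∈ e) ∧
    ∀ c : Fin n, Between n a c b → 2 ≤ interiorDeg n U c}

/-- `(a,b,c)` is a clockwise-oriented central triangle of `T`: the oriented edges
`(a,b)`, `(b,c)` and `(c,a)` have length at most `n/2` and `{a,b}`, `{b,c}`, `{a,c}`
are edges of `T`. -/
def CentralTriangle (n : ℕ) (T : Triangulation n) (a b c : Fin n) : Prop :=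
  2 * (b - a).val ≤ n ∧ 2 * (c - b).val ≤ n ∧ 2 * (a - c).val ≤ n ∧
    ({a, b} : Finset (Fin n)) ∈ T.edges ∧ ({b, c} : Finset (Fin n)) ∈ T.edges ∧
    ({a, c} : Finset (Fin n)) ∈ T.edges

/-!
Deleting `a` sends every edge of a triangulation other than `{a, a + 1}` to an edge of the smaller
polygon. Since a flip changes a single edge, it changes at most one edge of the image, so its
image is a flip or no move at all. A flip incident to `{a, a + 1}` removes one of the sides
`{a, c}`, `{a + 1, c}` of the triangle on `{a, a + 1}` and keeps the other; both sides have the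
same image, so such a flip does not move `T∖a`. Projecting the geodesic thus gives a walk from
`T∖a` to `U∖a` of length at most `d(T,U) - f`.

Crossings are decided by comparing clockwise offsets from a base point. Deleting `a` lowers every
offset from `a` by exactly one, so it preserves crossing and non-crossing, which is what makes
`T∖a` a triangulation.
-/

open Finset

lemma Finset.pair_eq_pair_iff {α : Type*} [DecidableEq α] {x y u v : α} :
    ({x, y} : Finset α) = {u, v} ↔ x = u ∧ y = v ∨ x = v ∧ y = u := by
  rw [← Finset.coe_inj, Finset.coe_pair, Finset.coe_pair, Set.pair_eq_pair_iff]

lemma Finset.image_pair {α β : Type*} [DecidableEq α] [DecidableEq β] (f : α → β)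
    (x y : α) :
    ({x, y} : Finset α).image f = {f x, f y} := by
  simp

lemma Finset.card_eq_two_cases {α : Type*} [DecidableEq α] (a : α) {e : Finset α}
    (he : e.card = 2) :
    (∃ c, c ≠ a ∧ e = {a, c}) ∨
      ∃ x y, x ≠ y ∧ x ≠ a ∧ y ≠ a ∧ e = {x, y} := by
  obtain ⟨x, y, hxy, rfl⟩ := Finset.card_eq_two.mp he
  by_cases hx : x = a
  · exact Or.inl ⟨y, hx ▸ hxy.symm, by rw [hx]⟩
  by_cases hy : y = a
  · exact Or.inl ⟨x, hy ▸ hxy, by rw [hy, Finset.pair_comm]⟩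
  exact Or.inr ⟨x, y, hxy, hx, hy, rfl⟩

section CyclicOrder

variable {m : ℕ}

lemma Fin.val_sub_eq_ite (u v : Fin m) :
    (u - v).val = if v.val ≤ u.val then u.val - v.val else m + u.val - v.val := by
  split_ifs with h
  · exact Fin.sub_val_of_le h
  · exact Fin.coe_sub_iff_lt.mpr (not_le.mp h)

def CyclicallyOrdered (p q r : ℕ) : Prop :=
  p < q ∧ q < r ∨ q < r ∧ r < p ∨ r < p ∧ p < q

lemma between_iff_cyclicallyOrdered [NeZero m] (c x y z : Fin m) :
    Between m x y z ↔ CyclicallyOrdered (x - c).val (y - c).val (z - c).val := by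
  unfold Between CyclicallyOrdered
  rw [← sub_sub_sub_cancel_right y x c, ← sub_sub_sub_cancel_right z x c,
    Fin.val_sub_eq_ite (y - c), Fin.val_sub_eq_ite (z - c)]
  have := (x - c).isLt; have := (y - c).isLt; have := (z - c).isLt
  split_ifs <;> omega

lemma cross_pair_iff (x y u v : Fin m) :
    Cross m {x, y} {u, v} ↔
      Between m x u y ∧ Between m y v x ∨ Between m x v y ∧ Between m y u x := by
  constructor
  · rintro ⟨p, q, r, s, he, hf, h₁, h₂⟩
    rcases Finset.pair_eq_pair_iff.mp he with ⟨rfl, rfl⟩ | ⟨rfl, rfl⟩ <;>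
      rcases Finset.pair_eq_pair_iff.mp hf with ⟨rfl, rfl⟩ | ⟨rfl, rfl⟩ <;> tauto
  · rintro (⟨h₁, h₂⟩ | ⟨h₁, h₂⟩)
    · exact ⟨x, y, u, v, rfl, rfl, h₁, h₂⟩
    · exact ⟨x, y, v, u, rfl, Finset.pair_comm u v, h₁, h₂⟩

lemma cross_pair_iff_cyclicallyOrdered [NeZero m] (c x y u v : Fin m) :
    Cross m {x, y} {u, v} ↔
      CyclicallyOrdered (x - c).val (u - c).val (y - c).val ∧
          CyclicallyOrdered (y - c).val (v - c).val (x - c).val ∨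
        CyclicallyOrdered (x - c).val (v - c).val (y - c).val ∧
          CyclicallyOrdered (y - c).val (u - c).val (x - c).val := by
  simp only [cross_pair_iff, between_iff_cyclicallyOrdered c]

lemma Fin.val_sub_pos_of_ne [NeZero m] {x c : Fin m} (h : x ≠ c) : 0 < (x - c).val :=
  Fin.val_pos_iff.mpr (Fin.pos_iff_ne_zero.mpr (sub_ne_zero.mpr h))

lemma Cross.ne [NeZero m] {x y u v : Fin m} (h : Cross m {x, y} {u, v}) :
    x ≠ u ∧ x ≠ v ∧ y ≠ u ∧ y ≠ v := by
  have h' := (cross_pair_iff_cyclicallyOrdered x x y u v).mp h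
  simp only [sub_self, Fin.val_zero, CyclicallyOrdered] at h'
  have hoff : ∀ z w : Fin m, z ≠ w ↔ (z - x).val ≠ (w - x).val := fun z w =>
    (Fin.val_injective.ne_iff.trans (sub_left_injective.ne_iff)).symm
  simp only [hoff, sub_self, Fin.val_zero]
  omega

lemma Cross.symm [NeZero m] {x y u v : Fin m} (h : Cross m {x, y} {u, v}) :
    Cross m {u, v} {x, y} := by
  have h' := (cross_pair_iff_cyclicallyOrdered x x y u v).mp h
  refine (cross_pair_iff_cyclicallyOrdered x u v x y).mpr ?_
  unfold CyclicallyOrdered at h' ⊢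
  omega

end CyclicOrder

section BoundaryEdge

variable {n : ℕ} (a : Fin (n + 2))

lemma add_one_ne_self : a + 1 ≠ a := by
  intro h
  simpa using congrArg (· - a) h

lemma val_add_one_sub_self : ((a + 1) - a).val = 1 := by
  rw [add_sub_cancel_left, Fin.val_one]

lemma val_sub_ne_one {x : Fin (n + 2)} (hx : x ≠ a + 1) : (x - a).val ≠ 1 := fun h =>
  hx (sub_left_injective (b := a) (Fin.ext (h.trans (val_add_one_sub_self a).symm)))

lemma not_cross_boundary (u v : Fin (n + 2)) : ¬ Cross (n + 2) {a, a + 1} {u, v} := by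
  intro h
  have h' := (cross_pair_iff_cyclicallyOrdered a a (a + 1) u v).mp h
  rw [sub_self, val_add_one_sub_self] at h'
  unfold CyclicallyOrdered at h'
  simp only [Fin.val_zero] at h'
  omega

variable {a}

lemma pair_ne_boundary_of_ne {u v : Fin (n + 2)} (hu : u ≠ a) (hv : v ≠ a) :
    ({u, v} : Finset (Fin (n + 2))) ≠ {a, a + 1} := by
  rw [Ne, Finset.pair_eq_pair_iff]
  tauto

lemma pair_self_ne_boundary {c : Fin (n + 2)} (hc : c ≠ a + 1) :
    ({a, c} : Finset (Fin (n + 2))) ≠ {a, a + 1} := by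
  rw [Ne, Finset.pair_eq_pair_iff]
  have := add_one_ne_self a
  tauto

lemma pair_add_one_ne_boundary {c : Fin (n + 2)} (hc : c ≠ a) :
    ({a + 1, c} : Finset (Fin (n + 2))) ≠ {a, a + 1} := by
  rw [Ne, Finset.pair_eq_pair_iff]
  have := add_one_ne_self a
  tauto

lemma cross_of_cross_add_one {y u v : Fin (n + 2)} (hu : u ≠ a) (hv : v ≠ a)
    (h : Cross (n + 2) {a + 1, y} {u, v}) : Cross (n + 2) {a, y} {u, v} := by
  have h' := (cross_pair_iff_cyclicallyOrdered a (a + 1) y u v).mp h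
  refine (cross_pair_iff_cyclicallyOrdered a a y u v).mpr ?_
  simp only [sub_self, Fin.val_zero, val_add_one_sub_self] at h' ⊢
  have := Fin.val_sub_pos_of_ne hu; have := Fin.val_sub_pos_of_ne hv
  unfold CyclicallyOrdered at h' ⊢
  omega

lemma cross_add_one_of_cross {y u v : Fin (n + 2)} (hu : u ≠ a + 1) (hv : v ≠ a + 1)
    (h : Cross (n + 2) {a, y} {u, v}) : Cross (n + 2) {a + 1, y} {u, v} := by
  have h' := (cross_pair_iff_cyclicallyOrdered a a y u v).mp h
  refine (cross_pair_iff_cyclicallyOrdered a (a + 1) y u v).mpr ?_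
  simp only [sub_self, Fin.val_zero, val_add_one_sub_self] at h' ⊢
  have := val_sub_ne_one a hu; have := val_sub_ne_one a hv
  unfold CyclicallyOrdered at h' ⊢
  omega

/- Seen from `a`, `d` lies strictly between `a + 1` and `y` and `e` strictly between `y` and `a`,
so the endpoints of `{a, d}` and `{a + 1, e}` interleave. -/
lemma cross_of_cross_triangle_sides {y d e : Fin (n + 2)}
    (hdy : Cross (n + 2) {a + 1, y} {a, d}) (hey : Cross (n + 2) {a, y} {a + 1, e}) :
    Cross (n + 2) {a, d} {a + 1, e} := by
  have h₁ := (cross_pair_iff_cyclicallyOrdered a (a + 1) y a d).mp hdy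
  have h₂ := (cross_pair_iff_cyclicallyOrdered a a y (a + 1) e).mp hey
  refine (cross_pair_iff_cyclicallyOrdered a a d (a + 1) e).mpr ?_
  simp only [sub_self, Fin.val_zero, val_add_one_sub_self] at h₁ h₂ ⊢
  unfold CyclicallyOrdered at h₁ h₂ ⊢
  omega

end BoundaryEdge

section DeleteVertex

variable {n : ℕ} (a : Fin (n + 2))

def delVert (v : Fin (n + 2)) : Fin (n + 1) :=
  collapse n a (if v = a then a + 1 else v)

lemma delVert_self : delVert a a = delVert a (a + 1) := by
  simp [delVert]

lemma val_delVert_of_ne {x : Fin (n + 2)} (hx : x ≠ a) :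
    (delVert a x).val = if x.val < a.val then x.val else x.val - 1 := by
  simp [delVert, collapse, hx]

lemma val_delVert_add_one :
    (delVert a (a + 1)).val = if a = Fin.last (n + 1) then 0 else a.val := by
  rw [val_delVert_of_ne a (add_one_ne_self a), Fin.val_add_one]
  split_ifs <;> omega

lemma val_sub_delVert_add_one {x : Fin (n + 2)} (hx : x ≠ a) :
    (delVert a x - delVert a (a + 1)).val + 1 = (x - a).val := by
  have hxa : x.val ≠ a.val := fun h => hx (Fin.ext h)
  have := x.isLt
  rw [Fin.val_sub_eq_ite, Fin.val_sub_eq_ite, val_delVert_add_one, val_delVert_of_ne a hx]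
  simp only [Fin.ext_iff, Fin.val_last]
  split_ifs <;> omega

variable {a}

lemma eq_of_delVert_eq {x y : Fin (n + 2)} (hx : x ≠ a) (hy : y ≠ a)
    (h : delVert a x = delVert a y) : x = y := by
  have hx' := val_sub_delVert_add_one a hx
  have hy' := val_sub_delVert_add_one a hy
  rw [h] at hx'
  exact sub_left_injective (b := a) (Fin.ext (hx'.symm.trans hy'))

variable (a) in
lemma exists_ne_delVert_eq (w : Fin (n + 1)) : ∃ x, x ≠ a ∧ delVert a x = w := by
  set x : Fin (n + 2) := a + ⟨(w - delVert a (a + 1)).val + 1, by omega⟩ with hxdef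
  have hxa : (x - a).val = (w - delVert a (a + 1)).val + 1 := by rw [hxdef, add_sub_cancel_left]
  have hne : x ≠ a := fun h => by simp [h] at hxa
  refine ⟨x, hne, sub_left_injective (b := delVert a (a + 1)) (Fin.ext ?_)⟩
  have := val_sub_delVert_add_one a hne
  dsimp only
  omega

lemma cross_delVert_iff {x y u v : Fin (n + 2)} (hx : x ≠ a) (hy : y ≠ a) (hu : u ≠ a)
    (hv : v ≠ a) :
    Cross (n + 1) {delVert a x, delVert a y} {delVert a u, delVert a v} ↔
      Cross (n + 2) {x, y} {u, v} := by
  rw [cross_pair_iff_cyclicallyOrdered (delVert a (a + 1)),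
    cross_pair_iff_cyclicallyOrdered a]
  have := val_sub_delVert_add_one a hx; have := val_sub_delVert_add_one a hy
  have := val_sub_delVert_add_one a hu; have := val_sub_delVert_add_one a hv
  unfold CyclicallyOrdered
  omega

end DeleteVertex

section Triangulation

variable {m : ℕ} {E : Finset (Finset (Fin m))}

lemma IsTriangulationOn.eq_of_subset {W : Finset (Fin m)} {F : Finset (Finset (Fin m))}
    (hE : IsTriangulationOn m W E) (hF : IsTriangulationOn m W F) (h : E ⊆ F) : E = F :=
  Finset.Subset.antisymm h fun f hf =>
    hE.2.2.2 f (hF.1 f hf) (hF.2.1 f hf) fun g hg => hF.2.2.1 f hf g (h hg)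

lemma IsTriangulationOn.exists_cross_of_notMem (hE : IsTriangulationOn m univ E) {x y : Fin m}
    (hxy : x ≠ y) (h : {x, y} ∉ E) : ∃ g ∈ E, Cross m {x, y} g := by
  by_contra! hno
  exact h (hE.2.2.2 _ (subset_univ _) (card_pair hxy) hno)

end Triangulation

section DeleteEdges

variable {n : ℕ} {a : Fin (n + 2)} {E : Finset (Finset (Fin (n + 2)))}

lemma deleteEdges_eq_image (a : Fin (n + 2)) (E : Finset (Finset (Fin (n + 2)))) :
    deleteEdges n a E = (E.erase {a, a + 1}).image (·.image (delVert a)) :=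
  rfl

lemma image_mem_deleteEdges {f : Finset (Fin (n + 2))} (hf : f ∈ E) (hfa : f ≠ {a, a + 1}) :
    f.image (delVert a) ∈ deleteEdges n a E :=
  mem_image_of_mem _ (mem_erase.mpr ⟨hfa, hf⟩)

lemma image_pair_self_eq_image_pair_add_one (d : Fin (n + 2)) :
    ({a, d} : Finset (Fin (n + 2))).image (delVert a) =
      ({a + 1, d} : Finset (Fin (n + 2))).image (delVert a) := by
  rw [image_pair, image_pair, delVert_self]

lemma card_image_delVert {e : Finset (Fin (n + 2))} (he : e.card = 2) (hea : e ≠ {a, a + 1}) :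
    (e.image (delVert a)).card = 2 := by
  rcases card_eq_two_cases a he with ⟨c, hc, rfl⟩ | ⟨x, y, hxy, hx, hy, rfl⟩ <;>
    rw [image_pair]
  · have hc' : c ≠ a + 1 := by rintro rfl; exact hea rfl
    rw [delVert_self]
    exact card_pair fun h => hc' (eq_of_delVert_eq (add_one_ne_self a) hc h).symm
  · exact card_pair fun h => hxy (eq_of_delVert_eq hx hy h)

lemma not_cross_image_delVert (hE : IsTriangulationOn (n + 2) univ E)
    {e f : Finset (Fin (n + 2))} (he : e ∈ E) (hf : f ∈ E) :
    ¬ Cross (n + 1) (e.image (delVert a)) (f.image (delVert a)) := by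
  have hb := add_one_ne_self a
  rcases card_eq_two_cases a (hE.2.1 e he) with ⟨c, hc, rfl⟩ | ⟨x, y, -, hx, hy, rfl⟩ <;>
    rcases card_eq_two_cases a (hE.2.1 f hf) with ⟨d, hd, rfl⟩ | ⟨u, v, -, hu, hv, rfl⟩ <;>
    simp only [image_pair, delVert_self] <;> intro hcross
  · exact hcross.ne.1 rfl
  · exact hE.2.2.1 _ he _ hf
      (cross_of_cross_add_one hu hv ((cross_delVert_iff hb hc hu hv).mp hcross))
  · exact hE.2.2.1 _ hf _ he
      (cross_of_cross_add_one hx hy ((cross_delVert_iff hb hd hx hy).mp hcross.symm))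
  · exact hE.2.2.1 _ he _ hf ((cross_delVert_iff hx hy hu hv).mp hcross)

lemma not_cross_of_forall_not_cross_deleteEdges {x y u v : Fin (n + 2)} (hx : x ≠ a)
    (hy : y ≠ a)
    (hnc : ∀ f ∈ deleteEdges n a E, ¬ Cross (n + 1) {delVert a x, delVert a y} f)
    (hu : u ≠ a) (hv : v ≠ a)
    (huv : ({u, v} : Finset (Fin (n + 2))).image (delVert a) ∈ deleteEdges n a E) :
    ¬ Cross (n + 2) {x, y} {u, v} := fun h =>
  hnc _ huv (by rw [image_pair]; exact (cross_delVert_iff hx hy hu hv).mpr h)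

lemma pair_delVert_mem_deleteEdges (hE : IsTriangulationOn (n + 2) univ E) {x y : Fin (n + 2)}
    (hxy : x ≠ y) (hx : x ≠ a) (hx' : x ≠ a + 1) (hy : y ≠ a) (hy' : y ≠ a + 1)
    (hnc : ∀ f ∈ deleteEdges n a E, ¬ Cross (n + 1) {delVert a x, delVert a y} f) :
    {delVert a x, delVert a y} ∈ deleteEdges n a E := by
  have hxyE : {x, y} ∈ E := by
    by_contra h
    obtain ⟨g, hg, hcross⟩ := hE.exists_cross_of_notMem hxy h
    rcases card_eq_two_cases a (hE.2.1 g hg) with ⟨d, hd, rfl⟩ | ⟨u, v, -, hu, hv, rfl⟩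
    · by_cases hd' : d = a + 1
      · subst hd'
        exact not_cross_boundary a x y hcross.symm
      · refine not_cross_of_forall_not_cross_deleteEdges hx hy hnc (add_one_ne_self a) hd ?_
          (cross_add_one_of_cross hx' hy' hcross.symm).symm
        rw [← image_pair_self_eq_image_pair_add_one]
        exact image_mem_deleteEdges hg (pair_self_ne_boundary hd')
    · exact not_cross_of_forall_not_cross_deleteEdges hx hy hnc hu hv
        (image_mem_deleteEdges hg (pair_ne_boundary_of_ne hu hv)) hcross
  simpa only [image_pair] using image_mem_deleteEdges hxyE (pair_ne_boundary_of_ne hx hy)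

/- Were the edge missing, neither side `{a + 1, y}` nor `{a, y}` of the triangle `a (a + 1) y`
would be in `E`: the first would be crossed by some `{a, d}` and the second by some `{a + 1, e}`
of `E`, and these two edges cross each other. -/
lemma pair_delVert_add_one_mem_deleteEdges (hE : IsTriangulationOn (n + 2) univ E)
    {y : Fin (n + 2)} (hy : y ≠ a) (hy' : y ≠ a + 1)
    (hnc : ∀ f ∈ deleteEdges n a E, ¬ Cross (n + 1) {delVert a (a + 1), delVert a y} f) :
    {delVert a (a + 1), delVert a y} ∈ deleteEdges n a E := by
  have hb := add_one_ne_self a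
  by_contra hmem
  have hby : {a + 1, y} ∉ E := fun h => hmem <| by
    simpa only [image_pair] using image_mem_deleteEdges h (pair_add_one_ne_boundary hy)
  have hay : {a, y} ∉ E := fun h => hmem <| by
    simpa only [image_pair, delVert_self] using image_mem_deleteEdges h (pair_self_ne_boundary hy')
  obtain ⟨g, hg, hgy⟩ := hE.exists_cross_of_notMem (Ne.symm hy') hby
  obtain ⟨d, rfl⟩ : ∃ d, g = {a, d} := by
    rcases card_eq_two_cases a (hE.2.1 g hg) with ⟨d, -, rfl⟩ | ⟨u, v, -, hu, hv, rfl⟩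
    · exact ⟨d, rfl⟩
    · exact (not_cross_of_forall_not_cross_deleteEdges hb hy hnc hu hv
        (image_mem_deleteEdges hg (pair_ne_boundary_of_ne hu hv)) hgy).elim
  obtain ⟨h, hh, hhy⟩ := hE.exists_cross_of_notMem (Ne.symm hy) hay
  obtain ⟨e, rfl⟩ : ∃ e, h = {a + 1, e} := by
    rcases card_eq_two_cases (a + 1) (hE.2.1 h hh) with
      ⟨e, -, rfl⟩ | ⟨u, v, -, hu', hv', rfl⟩
    · exact ⟨e, rfl⟩
    · obtain ⟨hu, hv, -, -⟩ := hhy.ne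
      exact (not_cross_of_forall_not_cross_deleteEdges hb hy hnc hu.symm hv.symm
        (image_mem_deleteEdges hh (pair_ne_boundary_of_ne hu.symm hv.symm))
        (cross_add_one_of_cross hu' hv' hhy)).elim
  exact hE.2.2.1 _ hg _ hh (cross_of_cross_triangle_sides hgy hhy)

lemma mem_deleteEdges_of_forall_not_cross (hE : IsTriangulationOn (n + 2) univ E)
    {e : Finset (Fin (n + 1))} (he : e.card = 2)
    (hnc : ∀ f ∈ deleteEdges n a E, ¬ Cross (n + 1) e f) : e ∈ deleteEdges n a E := by
  obtain ⟨w₁, w₂, hw, rfl⟩ := card_eq_two.mp he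
  obtain ⟨x, hx, rfl⟩ := exists_ne_delVert_eq a w₁
  obtain ⟨y, hy, rfl⟩ := exists_ne_delVert_eq a w₂
  have hxy : x ≠ y := fun h => hw (congrArg _ h)
  by_cases hx' : x = a + 1
  · subst hx'
    exact pair_delVert_add_one_mem_deleteEdges hE hy (Ne.symm hxy) hnc
  by_cases hy' : y = a + 1
  · subst hy'
    rw [pair_comm] at hnc ⊢
    exact pair_delVert_add_one_mem_deleteEdges hE hx hx' hnc
  exact pair_delVert_mem_deleteEdges hE hxy hx hx' hy hy' hnc

lemma isTriangulationOn_deleteEdges (hE : IsTriangulationOn (n + 2) univ E) :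
    IsTriangulationOn (n + 1) univ (deleteEdges n a E) := by
  refine ⟨fun e _ => subset_univ e, ?_, ?_, fun e _ => mem_deleteEdges_of_forall_not_cross hE⟩
  · simp only [deleteEdges_eq_image, forall_mem_image, mem_erase]
    rintro e ⟨hea, he⟩
    exact card_image_delVert (hE.2.1 e he) hea
  · simp only [deleteEdges_eq_image, forall_mem_image, mem_erase]
    rintro e ⟨-, he⟩ f ⟨-, hf⟩
    exact not_cross_image_delVert hE he hf

lemma card_sdiff_deleteEdges_le (a : Fin (n + 2)) (E F : Finset (Finset (Fin (n + 2)))) :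
    (deleteEdges n a E \ deleteEdges n a F).card ≤ (E \ F).card := by
  refine (card_le_card fun g hg => ?_).trans (card_image_le (f := (·.image (delVert a))))
  simp only [mem_sdiff, deleteEdges_eq_image, mem_image, mem_erase] at hg ⊢
  obtain ⟨⟨e, ⟨hea, he⟩, rfl⟩, hnot⟩ := hg
  exact ⟨e, ⟨he, fun heF => hnot ⟨e, ⟨hea, heF⟩, rfl⟩⟩, rfl⟩

end DeleteEdges

section FlipGraph

variable {n : ℕ} {a : Fin (n + 2)}

def Triangulation.delete (a : Fin (n + 2)) (X : Triangulation (n + 2)) : Triangulation (n + 1) :=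
  ⟨deleteEdges n a X.edges, isTriangulationOn_deleteEdges X.isTri⟩

lemma card_sdiff_delete_eq_one {X Y : Triangulation (n + 2)} (hXY : (X.edges \ Y.edges).card = 1)
    (hne : X.delete a ≠ Y.delete a) :
    ((X.delete a).edges \ (Y.delete a).edges).card = 1 := by
  refine le_antisymm ((card_sdiff_deleteEdges_le a _ _).trans hXY.le) (card_pos.mpr ?_)
  rw [nonempty_iff_ne_empty, Ne, sdiff_eq_empty_iff_subset]
  exact fun hsub => hne (Triangulation.edges_injective _
    ((X.delete a).isTri.eq_of_subset (Y.delete a).isTri hsub))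

lemma delete_eq_or_adj {X Y : Triangulation (n + 2)} (h : (flipGraph (n + 2)).Adj X Y) :
    X.delete a = Y.delete a ∨ (flipGraph (n + 1)).Adj (X.delete a) (Y.delete a) := by
  obtain ⟨-, hXY, hYX⟩ := h
  by_cases heq : X.delete a = Y.delete a
  · exact Or.inl heq
  · exact Or.inr ⟨heq, card_sdiff_delete_eq_one hXY heq,
      card_sdiff_delete_eq_one hYX (Ne.symm heq)⟩

/- The two sides `{a, c}` and `{a + 1, c}` of the triangle on `{a, a + 1}` have the same image
under the deletion, and a single flip cannot remove both of them. -/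
lemma delete_subset_of_apexOf {X Y : Triangulation (n + 2)} {c : Fin (n + 2)}
    (h : (flipGraph (n + 2)).Adj X Y) (hX : ApexOf (n + 2) X a (a + 1) c)
    (hY : ¬ ApexOf (n + 2) Y a (a + 1) c) : (X.delete a).edges ⊆ (Y.delete a).edges := by
  obtain ⟨hca, hcb, hac, hbc⟩ := hX
  obtain ⟨e, he⟩ := card_eq_one.mp h.2.1
  have hflipped : ∀ f ∈ X.edges, f ∉ Y.edges → f = e := fun f hf hfY =>
    mem_singleton.mp (he ▸ mem_sdiff.mpr ⟨hf, hfY⟩)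
  have himage : e.image (delVert a) = ({a, c} : Finset _).image (delVert a) := by
    by_cases hacY : {a, c} ∈ Y.edges
    · have hbcY : {a + 1, c} ∉ Y.edges := fun hbcY => hY ⟨hca, hcb, hacY, hbcY⟩
      rw [← hflipped _ hbc hbcY, image_pair_self_eq_image_pair_add_one]
    · rw [← hflipped _ hac hacY]
  have hkept : {a, c} ∈ Y.edges ∨ {a + 1, c} ∈ Y.edges := by
    by_contra! hlost
    have hpair := (hflipped _ hac hlost.1).trans (hflipped _ hbc hlost.2).symm
    rw [Finset.pair_eq_pair_iff] at hpair
    have := add_one_ne_self a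
    tauto
  have himageY : e.image (delVert a) ∈ deleteEdges n a Y.edges := by
    rcases hkept with hk | hk
    · exact himage ▸ image_mem_deleteEdges hk (pair_self_ne_boundary hcb)
    · rw [himage, image_pair_self_eq_image_pair_add_one]
      exact image_mem_deleteEdges hk (pair_add_one_ne_boundary hca)
  intro g hg
  obtain ⟨f, hf, rfl⟩ := mem_image.mp hg
  obtain ⟨hfa, hfX⟩ := mem_erase.mp hf
  by_cases hfY : f ∈ Y.edges
  · exact image_mem_deleteEdges hfY hfa
  · rwa [hflipped f hfX hfY]

lemma delete_eq_of_flipIncident {X Y : Triangulation (n + 2)} (h : (flipGraph (n + 2)).Adj X Y)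
    (hinc : FlipIncident (n + 2) X Y a (a + 1)) : X.delete a = Y.delete a := by
  obtain ⟨c, ⟨hX, hY⟩ | ⟨hY, hX⟩⟩ := hinc
  · exact Triangulation.edges_injective _
      ((X.delete a).isTri.eq_of_subset (Y.delete a).isTri (delete_subset_of_apexOf h hX hY))
  · exact (Triangulation.edges_injective _ ((Y.delete a).isTri.eq_of_subset (X.delete a).isTri
      (delete_subset_of_apexOf h.symm hY hX))).symm

open Classical in
lemma flipsIncident_cons {X Y Z : Triangulation (n + 2)} (h : (flipGraph (n + 2)).Adj X Y)
    (p : (flipGraph (n + 2)).Walk Y Z) (b : Fin (n + 2)) :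
    flipsIncident (.cons h p) a b = (if FlipIncident (n + 2) X Y a b then 1 else 0) +
      flipsIncident p a b := by
  by_cases hinc : FlipIncident (n + 2) X Y a b <;>
    simp [flipsIncident, SimpleGraph.Walk.darts_cons, hinc, Nat.add_comm]

lemma exists_walk_delete (a : Fin (n + 2)) {X Y : Triangulation (n + 2)}
    (p : (flipGraph (n + 2)).Walk X Y) :
    ∃ q : (flipGraph (n + 1)).Walk (X.delete a) (Y.delete a),
      q.length + flipsIncident p a (a + 1) ≤ p.length := by
  induction p with
  | nil => exact ⟨.nil, by simp [flipsIncident]⟩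
  | @cons X Y Z h p ih =>
    obtain ⟨q, hq⟩ := ih
    rw [flipsIncident_cons h p, SimpleGraph.Walk.length_cons]
    by_cases hinc : FlipIncident (n + 2) X Y a (a + 1)
    · refine ⟨q.copy (delete_eq_of_flipIncident h hinc).symm rfl, ?_⟩
      rw [SimpleGraph.Walk.length_copy, if_pos hinc]
      omega
    rw [if_neg hinc]
    rcases delete_eq_or_adj (a := a) h with heq | hadj
    · exact ⟨q.copy heq.symm rfl, by rw [SimpleGraph.Walk.length_copy]; omega⟩
    · exact ⟨.cons hadj q, by rw [SimpleGraph.Walk.length_cons]; omega⟩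

end FlipGraph

theorem stmt1_general (n : ℕ) (T U : Triangulation (n + 2)) (a : Fin (n + 2))
    (p : (flipGraph (n + 2)).Walk T U) (hp : p.length = (flipGraph (n + 2)).dist T U)
    (f : ℕ) (hf : flipsIncident p a (a + 1) = f)
    (T' U' : Triangulation (n + 1))
    (hT' : T'.edges = deleteEdges n a T.edges)
    (hU' : U'.edges = deleteEdges n a U.edges) :
    (flipGraph (n + 1)).dist T' U' + f ≤ (flipGraph (n + 2)).dist T U := by
  obtain rfl : T' = T.delete a := Triangulation.edges_injective _ hT'
  obtain rfl : U' = U.delete a := Triangulation.edges_injective _ hU'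
  obtain ⟨q, hq⟩ := exists_walk_delete a p
  calc (flipGraph (n + 1)).dist (T.delete a) (U.delete a) + f
      ≤ q.length + flipsIncident p a (a + 1) :=
        hf ▸ Nat.add_le_add_right (SimpleGraph.dist_le q) _
    _ ≤ p.length := hq
    _ = (flipGraph (n + 2)).dist T U := hp

/-- If exactly `f` flips are incident to the clockwise-oriented
boundary edge `(a, a+1)` along a geodesic between `T` and `U`, then
`d(T,U) ≥ d(T∖a, U∖a) + f`. -/
theorem stmt1 (n : ℕ) (hn : 4 ≤ n + 2) (T U : Triangulation (n + 2)) (a : Fin (n + 2))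
    (p : (flipGraph (n + 2)).Walk T U) (hp : p.length = (flipGraph (n + 2)).dist T U)
    (f : ℕ) (hf : flipsIncident p a (a + 1) = f)
    (T' U' : Triangulation (n + 1))
    (hT' : T'.edges = deleteEdges n a T.edges)
    (hU' : U'.edges = deleteEdges n a U.edges) :
    (flipGraph (n + 1)).dist T' U' + f ≤ (flipGraph (n + 2)).dist T U :=
  stmt1_general n T U a p hp f hf T' U' hT' hU'
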